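/- arXiv:2003.09967 — 3 statements merged into one kernel-verified Lean document; each statement's English description precedes it below -/
import Mathlib

section
/- Let q ≥ 1, let P₁, P₂ ⊆ ℝ^q be nonempty convex sets, and let U₁, U₂ : ℝ^q × ℝ^q → ℝ be differentiable functions such that for every fixed p₂ the map p₁ ↦ U₁(p₁, p₂) is concave and for every fixed p₁ the map p₂ ↦ U₂(p₁, p₂) is concave. Then a pair (p₁*, p₂*) ∈ P₁ × P₂ is a Nash equilibrium (i.e., p₁* maximizes p₁ ↦ U₁(p₁, p₂*) over P₁ and p₂* maximizes p₂ ↦ U₂(p₁*, p₂) over P₂) if and only if for all (p₁, p₂) ∈ P₁ × P₂ one has ⟨−∇₁U₁(p₁*, p₂*), p₁ − p₁*⟩ + ⟨−∇₂U₂(p₁*, p₂*), p₂ − p₂*⟩ ≥ 0, where ∇ᵢ denotes the gradient with respect to pᵢ. -/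
/-!
Each player's best-response problem is the maximization of a differentiable concave function
over a convex set, and for such a problem a point is a maximizer exactly when the directional
derivative towards every other feasible point is nonpositive: necessity is Fermat's rule along
segments, sufficiency is the tangent-line bound of a concave function. Because the two players'
strategies vary independently, the two first-order conditions combine into one sum, and they
are recovered from it by fixing the other coordinate at the equilibrium.
-/

open scoped RealInnerProductSpace
open Set

section FirstOrder

variable {E : Type*} [NormedAddCommGroup E] [NormedSpace ℝ E]
  {f : E → ℝ} {f' : E →L[ℝ] ℝ} {s : Set E} {x y : E}

theorem IsMaxOn.hasFDerivWithinAt_sub_nonpos (hs : Convex ℝ s) (hmax : IsMaxOn f s x)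
    (hf : HasFDerivWithinAt f f' s x) (hx : x ∈ s) (hy : y ∈ s) : f' (y - x) ≤ 0 :=
  hmax.localize.hasFDerivWithinAt_nonpos hf <|
    sub_mem_posTangentConeAt_of_segment_subset (hs.segment_subset hx hy)

theorem ConcaveOn.le_add_of_hasFDerivWithinAt (hfc : ConcaveOn ℝ s f)
    (hf : HasFDerivWithinAt f f' s x) (hx : x ∈ s) (hy : y ∈ s) : f y ≤ f x + f' (y - x) := by
  let ℓ : ℝ →ᵃ[ℝ] E := AffineMap.lineMap x y
  have hline : HasDerivWithinAt (f ∘ ℓ) (f' (y - x)) (ℓ ⁻¹' s) 0 :=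
    hf.comp_hasDerivWithinAt_of_eq 0 AffineMap.hasDerivWithinAt_lineMap (mapsTo_preimage _ _)
      (AffineMap.lineMap_apply_zero _ _).symm
  have hslope := (hfc.comp_affineMap ℓ).slope_le_of_hasDerivWithinAt
    (by simpa [ℓ] using hx) (by simpa [ℓ] using hy) zero_lt_one hline
  simp only [ℓ, slope_def_field, Function.comp_apply, AffineMap.lineMap_apply_zero,
    AffineMap.lineMap_apply_one, sub_zero, div_one] at hslope
  linarith

theorem ConcaveOn.isMaxOn_iff_hasFDerivWithinAt_sub_nonpos (hfc : ConcaveOn ℝ s f)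
    (hf : HasFDerivWithinAt f f' s x) (hx : x ∈ s) :
    IsMaxOn f s x ↔ ∀ y ∈ s, f' (y - x) ≤ 0 := by
  refine ⟨fun hmax y hy => hmax.hasFDerivWithinAt_sub_nonpos hfc.1 hf hx hy, fun h => ?_⟩
  exact isMaxOn_iff.2 fun y hy => by linarith [hfc.le_add_of_hasFDerivWithinAt hf hx hy, h y hy]

end FirstOrder

theorem ConcaveOn.isMaxOn_iff_inner_gradient_sub_nonpos {E : Type*} [NormedAddCommGroup E]
    [InnerProductSpace ℝ E] [CompleteSpace E] {f : E → ℝ} {s : Set E} {x : E}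
    (hfc : ConcaveOn ℝ s f) (hf : DifferentiableAt ℝ f x) (hx : x ∈ s) :
    IsMaxOn f s x ↔ ∀ y ∈ s, ⟪gradient f x, y - x⟫ ≤ 0 := by
  simpa using hfc.isMaxOn_iff_hasFDerivWithinAt_sub_nonpos
    hf.hasGradientAt.hasFDerivAt.hasFDerivWithinAt hx

theorem forall_nonpos_and_forall_nonpos_iff_forall_add_nonpos {α β : Type*}
    {s : Set α} {t : Set β} {a : α} {b : β} {φ : α → ℝ} {ψ : β → ℝ}
    (ha : a ∈ s) (hb : b ∈ t) (hφ : φ a = 0) (hψ : ψ b = 0) :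
    ((∀ x ∈ s, φ x ≤ 0) ∧ ∀ y ∈ t, ψ y ≤ 0) ↔ ∀ x ∈ s, ∀ y ∈ t, φ x + ψ y ≤ 0 := by
  refine ⟨fun ⟨hs, ht⟩ x hx y hy => add_nonpos (hs x hx) (ht y hy), fun h => ⟨?_, ?_⟩⟩
  · exact fun x hx => by simpa [hψ] using h x hx b hb
  · exact fun y hy => by simpa [hφ] using h a ha y hy

theorem nash_equilibrium_iff_variational_inequality_general
    (q : ℕ)
    (P₁ P₂ : Set (EuclideanSpace ℝ (Fin q)))
    (hP₁ : Convex ℝ P₁) (hP₂ : Convex ℝ P₂)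
    (U₁ U₂ : EuclideanSpace ℝ (Fin q) × EuclideanSpace ℝ (Fin q) → ℝ)
    (hU₁d : Differentiable ℝ U₁) (hU₂d : Differentiable ℝ U₂)
    (hU₁c : ∀ p₂, ConcaveOn ℝ Set.univ (fun p₁ => U₁ (p₁, p₂)))
    (hU₂c : ∀ p₁, ConcaveOn ℝ Set.univ (fun p₂ => U₂ (p₁, p₂)))
    (ps₁ ps₂ : EuclideanSpace ℝ (Fin q)) (hps₁ : ps₁ ∈ P₁) (hps₂ : ps₂ ∈ P₂) :
    ((∀ p₁ ∈ P₁, U₁ (p₁, ps₂) ≤ U₁ (ps₁, ps₂)) ∧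
      (∀ p₂ ∈ P₂, U₂ (ps₁, p₂) ≤ U₂ (ps₁, ps₂))) ↔
    (∀ p₁ ∈ P₁, ∀ p₂ ∈ P₂,
      ⟪-gradient (fun x => U₁ (x, ps₂)) ps₁, p₁ - ps₁⟫ +
        ⟪-gradient (fun x => U₂ (ps₁, x)) ps₂, p₂ - ps₂⟫ ≥ 0) := by
  have hbest₁ :=
    ((hU₁c ps₂).subset (subset_univ _) hP₁).isMaxOn_iff_inner_gradient_sub_nonpos
      (hU₁d.comp (differentiable_id.prodMk (differentiable_const _)) ps₁) hps₁
  have hbest₂ :=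
    ((hU₂c ps₁).subset (subset_univ _) hP₂).isMaxOn_iff_inner_gradient_sub_nonpos
      (hU₂d.comp ((differentiable_const _).prodMk differentiable_id) ps₂) hps₂
  rw [isMaxOn_iff] at hbest₁ hbest₂
  simp only [inner_neg_left, ge_iff_le, ← neg_add, neg_nonneg]
  rw [hbest₁, hbest₂]
  exact forall_nonpos_and_forall_nonpos_iff_forall_add_nonpos hps₁ hps₂ (by simp) (by simp)

/-- A pair `(ps₁, ps₂) ∈ P₁ × P₂` is a Nash equilibrium (each agent plays a best response,
with concave differentiable utilities over nonempty convex strategy sets) if and only if it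
solves the variational inequality `VI(f, P₁ × P₂)` with `f(p) = (-∇₁U₁(p), -∇₂U₂(p))`. -/
theorem nash_equilibrium_iff_variational_inequality
    (q : ℕ) (hq : 1 ≤ q)
    (P₁ P₂ : Set (EuclideanSpace ℝ (Fin q)))
    (hP₁ne : P₁.Nonempty) (hP₂ne : P₂.Nonempty)
    (hP₁ : Convex ℝ P₁) (hP₂ : Convex ℝ P₂)
    (U₁ U₂ : EuclideanSpace ℝ (Fin q) × EuclideanSpace ℝ (Fin q) → ℝ)
    (hU₁d : Differentiable ℝ U₁) (hU₂d : Differentiable ℝ U₂)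
    (hU₁c : ∀ p₂, ConcaveOn ℝ Set.univ (fun p₁ => U₁ (p₁, p₂)))
    (hU₂c : ∀ p₁, ConcaveOn ℝ Set.univ (fun p₂ => U₂ (p₁, p₂)))
    (ps₁ ps₂ : EuclideanSpace ℝ (Fin q)) (hps₁ : ps₁ ∈ P₁) (hps₂ : ps₂ ∈ P₂) :
    ((∀ p₁ ∈ P₁, U₁ (p₁, ps₂) ≤ U₁ (ps₁, ps₂)) ∧
      (∀ p₂ ∈ P₂, U₂ (ps₁, p₂) ≤ U₂ (ps₁, ps₂))) ↔
    (∀ p₁ ∈ P₁, ∀ p₂ ∈ P₂,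
      ⟪-gradient (fun x => U₁ (x, ps₂)) ps₁, p₁ - ps₁⟫ +
        ⟪-gradient (fun x => U₂ (ps₁, x)) ps₂, p₂ - ps₂⟫ ≥ 0) :=
  nash_equilibrium_iff_variational_inequality_general q P₁ P₂ hP₁ hP₂ U₁ U₂ hU₁d hU₂d hU₁c hU₂c ps₁
    ps₂ hps₁ hps₂
end

section
/- (Theorem 1 of the paper.) Let q, m ≥ 1 and ε ≥ 0. For i = 1, 2 let P_i = {p ∈ ℝ^q : A_i p = b_i, p ∈ K_i}, where A_i is a real m × q matrix, b_i ∈ ℝ^m, and K_i ⊆ ℝ^q is a closed convex cone with nonempty interior, and suppose Slater's condition holds for each P_i: there exists p_i⁰ in the interior of K_i with A_i p_i⁰ = b_i. Let f₁, f₂ : ℝ^q × ℝ^q → ℝ^q and let p̄ = (p̄₁, p̄₂) ∈ P₁ × P₂. Then the following are equivalent: (1) ⟨f₁(p̄), p₁ − p̄₁⟩ + ⟨f₂(p̄), p₂ − p̄₂⟩ ≥ −ε for all (p₁, p₂) ∈ P₁ × P₂; (2) there exist y₁, y₂ ∈ ℝ^m such that f_i(p̄) − A_iᵀ y_i ∈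 K_i* for i = 1, 2 and Σ_{i=1}^{2} (⟨f_i(p̄), p̄_i⟩ − ⟨b_i, y_i⟩) ≤ ε, where K_i* = {x ∈ ℝ^q : ⟨x, p⟩ ≥ 0 for all p ∈ K_i} is the dual cone of K_i. -/
/-!
Both players' constraints decouple, so the theorem reduces to strong duality for a single conic
program `min {c ⬝ᵥ p : p ∈ K, A *ᵥ p = b}`: if `v` bounds its value from below, some `y` has
`c - Aᵀ *ᵥ y ∈ K*` and `v ≤ b ⬝ᵥ y`. To find `y`, separate the epigraph of `c ⬝ᵥ ·` over `K` from
`{(p, r) : A *ᵥ p = b, r < v}`; the separating functional `(φ, μ)` is bounded on an affine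
subspace, so `φ` factors through `A`, and Slater's point rules out the vertical case `μ = 0`.
Normalising `μ = -1` gives a Lagrange multiplier, and the cone property turns the Lagrangian
bound into dual feasibility. The converse is weak duality.
-/

open Matrix

variable {ι κ : Type*} [Fintype ι]

def dualCone (K : Set (ι → ℝ)) : Set (ι → ℝ) := {w | ∀ p ∈ K, 0 ≤ w ⬝ᵥ p}

theorem Matrix.exists_eq_dotProduct_mulVec [Fintype κ] {𝕜 : Type*} [Field 𝕜] (A : Matrix κ ι 𝕜)
    (φ : Module.Dual 𝕜 (ι → 𝕜)) (hφ : ∀ p, A *ᵥ p = 0 → φ p = 0) :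
    ∃ z : κ → 𝕜, ∀ p, φ p = z ⬝ᵥ A *ᵥ p := by
  classical
  have hφ : φ ∈ LinearMap.range A.mulVecLin.dualMap := by
    rw [LinearMap.range_dualMap_eq_dualAnnihilator_ker, Submodule.mem_dualAnnihilator]
    exact hφ
  obtain ⟨ψ, rfl⟩ := hφ
  refine ⟨(dotProductEquiv 𝕜 κ).symm ψ, fun p => ?_⟩
  rw [LinearMap.dualMap_apply, ← dotProductEquiv_apply_apply, LinearEquiv.apply_symm_apply,
    mulVecLin_apply]

theorem nonneg_and_nonpos_of_forall_pos_le_mul {a x : ℝ} (h : ∀ t : ℝ, 0 < t → a ≤ t * x) :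
    0 ≤ x ∧ a ≤ 0 := by
  constructor
  · by_contra! hx
    have := h ((|a| + 1) / -x) (div_pos (by positivity) (neg_pos.2 hx))
    rw [div_mul_eq_mul_div, div_neg, mul_div_assoc, div_self hx.ne, mul_one] at this
    linarith [neg_abs_le a]
  · by_contra! ha
    have hx : 0 < x := by linarith [h 1 one_pos]
    have := h (a / (2 * x)) (by positivity)
    rw [div_mul_eq_mul_div, mul_div_mul_right _ _ hx.ne'] at this
    linarith

theorem eq_zero_of_forall_le_add_mul {a b x : ℝ} (h : ∀ s : ℝ, a ≤ b + s * x) : x = 0 := by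
  by_contra hx
  have := h ((a - b - 1) / x)
  rw [div_mul_cancel₀ _ hx] at this
  linarith

theorem mem_dualCone_and_nonpos_of_forall_le_dotProduct {K : Set (ι → ℝ)}
    (hK : ∀ t : ℝ, 0 < t → ∀ x ∈ K, t • x ∈ K) (hne : K.Nonempty) {g : ι → ℝ} {a : ℝ}
    (h : ∀ p ∈ K, a ≤ g ⬝ᵥ p) : g ∈ dualCone K ∧ a ≤ 0 := by
  have hscale : ∀ p ∈ K, ∀ t : ℝ, 0 < t → a ≤ t * g ⬝ᵥ p := fun p hp t ht => by
    simpa [dotProduct_smul] using h _ (hK t ht p hp)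
  obtain ⟨p₀, hp₀⟩ := hne
  exact ⟨fun p hp => (nonneg_and_nonpos_of_forall_pos_le_mul (hscale p hp)).1,
    (nonneg_and_nonpos_of_forall_pos_le_mul (hscale p₀ hp₀)).2⟩

theorem dotProduct_le_of_mem_dualCone [Fintype κ] {K : Set (ι → ℝ)} {A : Matrix κ ι ℝ} {b : κ → ℝ}
    {c p : ι → ℝ} {y : κ → ℝ} (hy : c - Aᵀ *ᵥ y ∈ dualCone K) (hp : p ∈ K) (hAp : A *ᵥ p = b) :
    b ⬝ᵥ y ≤ c ⬝ᵥ p := by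
  have := hy p hp
  rw [sub_dotProduct, mulVec_transpose, ← dotProduct_mulVec, hAp, sub_nonneg] at this
  rwa [dotProduct_comm b]

theorem exists_forall_le_of_forall_le_add {α β : Type*} {S : Set α} {T : Set β} {F : α → ℝ}
    {G : β → ℝ} {a : ℝ} (hS : S.Nonempty) (hT : T.Nonempty)
    (h : ∀ x ∈ S, ∀ y ∈ T, a ≤ F x + G y) :
    ∃ w, (∀ x ∈ S, a - w ≤ F x) ∧ ∀ y ∈ T, w ≤ G y := by
  obtain ⟨x₀, hx₀⟩ := hS
  have hbdd : BddBelow (G '' T) := ⟨a - F x₀, by rintro _ ⟨y, hy, rfl⟩; linarith [h x₀ hx₀ y hy]⟩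
  refine ⟨sInf (G '' T), fun x hx => ?_, fun y hy => csInf_le hbdd ⟨y, hy, rfl⟩⟩
  have : a - F x ≤ sInf (G '' T) :=
    le_csInf (hT.image G) (by rintro _ ⟨y, hy, rfl⟩; linarith [h x hx y hy])
  linarith

theorem exists_separating_functional_of_forall_le_dotProduct {K : Set (ι → ℝ)} (hconv : Convex ℝ K)
    {A : Matrix κ ι ℝ} {b : κ → ℝ} {p₀ : ι → ℝ} (hp₀ : p₀ ∈ interior K) (hAp₀ : A *ᵥ p₀ = b)
    {c : ι → ℝ} {v : ℝ} (hv : ∀ p ∈ K, A *ᵥ p = b → v ≤ c ⬝ᵥ p) :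
    ∃ (φ : StrongDual ℝ (ι → ℝ)) (μ : ℝ), ¬(φ = 0 ∧ μ = 0) ∧
      ∀ p ∈ K, ∀ p', A *ᵥ p' = b → ∀ r < v, φ p + μ * c ⬝ᵥ p ≤ φ p' + μ * r := by
  set epi : Set ((ι → ℝ) × ℝ) := {z | z.1 ∈ K ∧ c ⬝ᵥ z.1 ≤ z.2}
  set low : Set ((ι → ℝ) × ℝ) := {z | A *ᵥ z.1 = b ∧ z.2 < v}
  have hepi : Convex ℝ epi := ((dotProductBilin ℝ ℝ c).convexOn hconv).convex_epigraph
  have hlow : Convex ℝ low :=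
    ((convex_singleton b).prod (convex_Iio v)).linear_preimage (s := ({b} : Set (κ → ℝ)) ×ˢ Set.Iio v)
      (A.mulVecLin.prodMap LinearMap.id)
  have hint : (p₀, c ⬝ᵥ p₀ + 1) ∈ interior epi := by
    set U : Set ((ι → ℝ) × ℝ) := {z | z.1 ∈ interior K ∧ c ⬝ᵥ z.1 < z.2}
    have hU : IsOpen U := (isOpen_interior.preimage continuous_fst).inter
      (isOpen_lt (continuous_const.dotProduct continuous_fst) continuous_snd)
    have hUepi : U ⊆ epi := fun z hz => ⟨interior_subset hz.1, hz.2.le⟩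
    exact interior_maximal hUepi hU ⟨hp₀, lt_add_one _⟩
  have hdisj : Disjoint (interior epi) low := by
    refine Set.disjoint_left.2 fun z hz hz' => ?_
    have := hv z.1 (interior_subset hz).1 hz'.1
    linarith [(interior_subset hz).2, hz'.2]
  obtain ⟨f, u, hf, hfepi, hflow⟩ := geometric_hahn_banach_of_nonempty_interior hepi hlow hdisj
    ⟨_, hint⟩ ⟨(p₀, v - 1), hAp₀, by linarith⟩
  have hsplit : ∀ p r, f (p, r) = f.comp (ContinuousLinearMap.inl ℝ _ ℝ) p + r * f (0, 1) := by
    intro p r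
    have hr : ((0 : ι → ℝ), r) = r • ((0 : ι → ℝ), (1 : ℝ)) := by simp
    rw [← f.comp_inl_add_comp_inr (p, r)]
    congr 1
    change f (0, r) = r * f (0, 1)
    rw [hr, map_smul, smul_eq_mul]
  refine ⟨f.comp (ContinuousLinearMap.inl ℝ _ ℝ), f (0, 1), fun h => hf ?_, ?_⟩
  · refine ContinuousLinearMap.ext fun z => ?_
    rw [← Prod.mk.eta (p := z), hsplit, h.1, h.2]
    simp
  · intro p hp p' hp' r hr
    have h1 := hfepi (p, c ⬝ᵥ p) ⟨hp, le_rfl⟩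
    have h2 := hflow (p', r) ⟨hp', hr⟩
    rw [hsplit] at h1 h2
    linarith

theorem exists_lagrange_multiplier_of_slater [Fintype κ] {K : Set (ι → ℝ)} (hconv : Convex ℝ K)
    {A : Matrix κ ι ℝ} {b : κ → ℝ} {p₀ : ι → ℝ} (hp₀ : p₀ ∈ interior K) (hAp₀ : A *ᵥ p₀ = b)
    {c : ι → ℝ} {v : ℝ} (hv : ∀ p ∈ K, A *ᵥ p = b → v ≤ c ⬝ᵥ p) :
    ∃ y : κ → ℝ, ∀ p ∈ K, v - b ⬝ᵥ y ≤ (c - Aᵀ *ᵥ y) ⬝ᵥ p := by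
  obtain ⟨φ, μ, hne, hsep⟩ :=
    exists_separating_functional_of_forall_le_dotProduct hconv hp₀ hAp₀ hv
  have hp₀K := interior_subset hp₀
  have hker : ∀ d, A *ᵥ d = 0 → φ d = 0 := fun d hd =>
    eq_zero_of_forall_le_add_mul (a := φ p₀ + μ * c ⬝ᵥ p₀) (b := φ p₀ + μ * (v - 1)) fun s => by
      have := hsep p₀ hp₀K (p₀ + s • d) (by simp [mulVec_add, mulVec_smul, hd, hAp₀]) (v - 1)
        (by linarith)
      rw [map_add, map_smul, smul_eq_mul] at this
      linarith
  have hμ : μ < 0 := by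
    refine lt_of_le_of_ne (not_lt.1 fun hμ => ?_) fun hμ => hne ⟨?_, hμ⟩
    · have := hsep p₀ hp₀K p₀ hAp₀ (min v (c ⬝ᵥ p₀) - 1) (by linarith [min_le_left v (c ⬝ᵥ p₀)])
      nlinarith [min_le_right v (c ⬝ᵥ p₀)]
    · -- with `μ = 0`, `φ` is maximal over `K` at the interior point `p₀`, hence zero
      have hmax : IsLocalMax φ p₀ := Filter.mem_of_superset (mem_interior_iff_mem_nhds.1 hp₀)
        fun p hp => by simpa [hμ] using hsep p hp p₀ hAp₀ (v - 1) (by linarith)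
      exact hmax.hasFDerivAt_eq_zero φ.hasFDerivAt
  obtain ⟨z, hz⟩ := A.exists_eq_dotProduct_mulVec φ.toLinearMap hker
  obtain ⟨y, hφy⟩ : ∃ y : κ → ℝ, ∀ p, φ p = -μ * (y ⬝ᵥ A *ᵥ p) :=
    ⟨(-μ)⁻¹ • z, fun p => by
      rw [← φ.coe_coe, hz, smul_dotProduct, smul_eq_mul, mul_inv_cancel_left₀ (by linarith)]⟩
  refine ⟨y, fun p hp => sub_le_iff_le_add.2 (le_of_forall_lt_imp_le_of_dense fun r hr => ?_)⟩
  have key : -μ * (y ⬝ᵥ A *ᵥ p - c ⬝ᵥ p) ≤ -μ * (y ⬝ᵥ b - r) := by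
    have := hsep p hp p₀ hAp₀ r hr
    rw [hφy, hφy, hAp₀] at this
    linarith
  have := le_of_mul_le_mul_left key (by linarith)
  rw [sub_dotProduct, mulVec_transpose, ← dotProduct_mulVec, dotProduct_comm b]
  linarith

theorem exists_mem_dualCone_of_slater [Fintype κ] {K : Set (ι → ℝ)} (hconv : Convex ℝ K)
    (hcone : ∀ t : ℝ, 0 < t → ∀ x ∈ K, t • x ∈ K) {A : Matrix κ ι ℝ} {b : κ → ℝ} {p₀ : ι → ℝ}
    (hp₀ : p₀ ∈ interior K) (hAp₀ : A *ᵥ p₀ = b) {c : ι → ℝ} {v : ℝ}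
    (hv : ∀ p ∈ K, A *ᵥ p = b → v ≤ c ⬝ᵥ p) :
    ∃ y : κ → ℝ, c - Aᵀ *ᵥ y ∈ dualCone K ∧ v ≤ b ⬝ᵥ y := by
  obtain ⟨y, hy⟩ := exists_lagrange_multiplier_of_slater hconv hp₀ hAp₀ hv
  obtain ⟨hdual, hgap⟩ :=
    mem_dualCone_and_nonpos_of_forall_le_dotProduct hcone ⟨p₀, interior_subset hp₀⟩ hy
  exact ⟨y, hdual, by linarith⟩

theorem eps_approx_VI_iff_conic_certificate_general
    (q m : ℕ) (ε : ℝ)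
    (K₁ K₂ : Set (Fin q → ℝ))
    (hK₁convex : Convex ℝ K₁)
    (hK₁cone : ∀ t : ℝ, 0 < t → ∀ x ∈ K₁, t • x ∈ K₁)
    (hK₂convex : Convex ℝ K₂)
    (hK₂cone : ∀ t : ℝ, 0 < t → ∀ x ∈ K₂, t • x ∈ K₂)
    (A₁ A₂ : Matrix (Fin m) (Fin q) ℝ) (b₁ b₂ : Fin m → ℝ)
    (p₁0 : Fin q → ℝ) (hSlater₁ : p₁0 ∈ interior K₁ ∧ A₁.mulVec p₁0 = b₁)
    (p₂0 : Fin q → ℝ) (hSlater₂ : p₂0 ∈ interior K₂ ∧ A₂.mulVec p₂0 = b₂)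
    (f₁ f₂ : (Fin q → ℝ) × (Fin q → ℝ) → (Fin q → ℝ))
    (pb₁ pb₂ : Fin q → ℝ) :
    (∀ p₁, A₁.mulVec p₁ = b₁ → p₁ ∈ K₁ → ∀ p₂, A₂.mulVec p₂ = b₂ → p₂ ∈ K₂ →
        f₁ (pb₁, pb₂) ⬝ᵥ (p₁ - pb₁) + f₂ (pb₁, pb₂) ⬝ᵥ (p₂ - pb₂) ≥ -ε) ↔
    (∃ y₁ y₂ : Fin m → ℝ,
      (∀ p ∈ K₁, 0 ≤ (f₁ (pb₁, pb₂) - A₁.transpose.mulVec y₁) ⬝ᵥ p) ∧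
      (∀ p ∈ K₂, 0 ≤ (f₂ (pb₁, pb₂) - A₂.transpose.mulVec y₂) ⬝ᵥ p) ∧
      (f₁ (pb₁, pb₂) ⬝ᵥ pb₁ - b₁ ⬝ᵥ y₁) + (f₂ (pb₁, pb₂) ⬝ᵥ pb₂ - b₂ ⬝ᵥ y₂) ≤ ε) := by
  set c₁ := f₁ (pb₁, pb₂)
  set c₂ := f₂ (pb₁, pb₂)
  constructor
  · intro hVI
    obtain ⟨w, hw₁, hw₂⟩ := exists_forall_le_of_forall_le_add (F := (c₁ ⬝ᵥ ·)) (G := (c₂ ⬝ᵥ ·))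
      (S := {p | p ∈ K₁ ∧ A₁ *ᵥ p = b₁}) (T := {p | p ∈ K₂ ∧ A₂ *ᵥ p = b₂})
      ⟨p₁0, interior_subset hSlater₁.1, hSlater₁.2⟩ ⟨p₂0, interior_subset hSlater₂.1, hSlater₂.2⟩
      fun p₁ hp₁ p₂ hp₂ => by
        have := hVI p₁ hp₁.2 hp₁.1 p₂ hp₂.2 hp₂.1
        rw [dotProduct_sub, dotProduct_sub] at this
        exact (by linarith : c₁ ⬝ᵥ pb₁ + c₂ ⬝ᵥ pb₂ - ε ≤ c₁ ⬝ᵥ p₁ + c₂ ⬝ᵥ p₂)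
    obtain ⟨y₁, hy₁, hby₁⟩ := exists_mem_dualCone_of_slater hK₁convex hK₁cone hSlater₁.1
      hSlater₁.2 fun p hp hAp => hw₁ p ⟨hp, hAp⟩
    obtain ⟨y₂, hy₂, hby₂⟩ := exists_mem_dualCone_of_slater hK₂convex hK₂cone hSlater₂.1
      hSlater₂.2 fun p hp hAp => hw₂ p ⟨hp, hAp⟩
    exact ⟨y₁, y₂, hy₁, hy₂, by linarith⟩
  · rintro ⟨y₁, y₂, hy₁, hy₂, hgap⟩ p₁ hp₁A hp₁K p₂ hp₂A hp₂K
    have h₁ := dotProduct_le_of_mem_dualCone hy₁ hp₁K hp₁A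
    have h₂ := dotProduct_le_of_mem_dualCone hy₂ hp₂K hp₂A
    rw [dotProduct_sub, dotProduct_sub]
    linarith

/-- Theorem 1 of the paper: with conic-standard-form strategy sets
`Pᵢ = {p : Aᵢ p = bᵢ, p ∈ Kᵢ}` each satisfying Slater's condition, a point
`p̄ = (pb₁, pb₂) ∈ P₁ × P₂` is an ε-approximate solution of the variational inequality
`VI(f, P₁ × P₂)` (with stacked map `f = (f₁, f₂)`) if and only if there exist dual
multipliers `y₁, y₂` with `fᵢ(p̄) - Aᵢᵀyᵢ ∈ Kᵢ*` and aggregate duality gap at most `ε`. -/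
theorem eps_approx_VI_iff_conic_certificate
    (q m : ℕ) (hq : 1 ≤ q) (hm : 1 ≤ m) (ε : ℝ) (hε : 0 ≤ ε)
    (K₁ K₂ : Set (Fin q → ℝ))
    (hK₁closed : IsClosed K₁) (hK₁convex : Convex ℝ K₁)
    (hK₁cone : ∀ t : ℝ, 0 < t → ∀ x ∈ K₁, t • x ∈ K₁)
    (hK₁int : (interior K₁).Nonempty)
    (hK₂closed : IsClosed K₂) (hK₂convex : Convex ℝ K₂)
    (hK₂cone : ∀ t : ℝ, 0 < t → ∀ x ∈ K₂, t • x ∈ K₂)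
    (hK₂int : (interior K₂).Nonempty)
    (A₁ A₂ : Matrix (Fin m) (Fin q) ℝ) (b₁ b₂ : Fin m → ℝ)
    (p₁0 : Fin q → ℝ) (hSlater₁ : p₁0 ∈ interior K₁ ∧ A₁.mulVec p₁0 = b₁)
    (p₂0 : Fin q → ℝ) (hSlater₂ : p₂0 ∈ interior K₂ ∧ A₂.mulVec p₂0 = b₂)
    (f₁ f₂ : (Fin q → ℝ) × (Fin q → ℝ) → (Fin q → ℝ))
    (pb₁ pb₂ : Fin q → ℝ)
    (hpb₁ : A₁.mulVec pb₁ = b₁ ∧ pb₁ ∈ K₁)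
    (hpb₂ : A₂.mulVec pb₂ = b₂ ∧ pb₂ ∈ K₂) :
    (∀ p₁, A₁.mulVec p₁ = b₁ → p₁ ∈ K₁ → ∀ p₂, A₂.mulVec p₂ = b₂ → p₂ ∈ K₂ →
        f₁ (pb₁, pb₂) ⬝ᵥ (p₁ - pb₁) + f₂ (pb₁, pb₂) ⬝ᵥ (p₂ - pb₂) ≥ -ε) ↔
    (∃ y₁ y₂ : Fin m → ℝ,
      (∀ p ∈ K₁, 0 ≤ (f₁ (pb₁, pb₂) - A₁.transpose.mulVec y₁) ⬝ᵥ p) ∧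
      (∀ p ∈ K₂, 0 ≤ (f₂ (pb₁, pb₂) - A₂.transpose.mulVec y₂) ⬝ᵥ p) ∧
      (f₁ (pb₁, pb₂) ⬝ᵥ pb₁ - b₁ ⬝ᵥ y₁) + (f₂ (pb₁, pb₂) ⬝ᵥ pb₂ - b₂ ⬝ᵥ y₂) ≤ ε) :=
  eps_approx_VI_iff_conic_certificate_general q m ε K₁ K₂ hK₁convex hK₁cone hK₂convex hK₂cone A₁ A₂
    b₁ b₂ p₁0 hSlater₁ p₂0 hSlater₂ f₁ f₂ pb₁ pb₂
end

section
/- (Perfect equilibrium yields zero residuals with complementary slackness.) Let p̄ > 0 and m₁, m₂ ∈ ℝ, and suppose (p₁, p₂) ∈ [0, p̄] × [0, p̄] is an exact equilibrium point, i.e., (−m₁)(q₁ − p₁) + (−m₂)(q₂ − p₂) ≥ 0 for all (q₁, q₂) ∈ [0, p̄] × [0, p̄]. Then there exist y₁, y₂ ≥ 0 such that: y_i ≥ m_i for i = 1, 2; y_i = 0 whenever p_i < p̄; and the duality gap is exactly zero: p̄(y₁ + y₂) − (p₁ m₁ + p₂ m₂) = 0. Consequently, if the observed prices are exact Nash equilibria,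 the regulator's inverse variational problem admits a feasible point with all residual estimates equal to zero. -/
/-!
Each coordinate of an equilibrium of a box game maximises the linear function `q ↦ mᵢ q` over
`[0, p̄]`, so `mᵢ ≤ 0` when `pᵢ < p̄` and `pᵢ mᵢ ≥ 0` always. The positive parts `yᵢ = max mᵢ 0`
are therefore dual feasible, vanish off the upper bound, and satisfy `p̄ yᵢ = pᵢ mᵢ`.
-/

open Set

section LinearMaximizer

variable {R : Type*} [CommRing R] [LinearOrder R] [IsStrictOrderedRing R] {b m p : R}

theorem nonpos_of_isMaxOn_mul_Icc_of_lt (hmax : IsMaxOn (m * ·) (Icc 0 b) p)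
    (hp : p ∈ Icc 0 b) (hlt : p < b) : m ≤ 0 := by
  have hb : m * b ≤ m * p := isMaxOn_iff.mp hmax b ⟨hp.1.trans hp.2, le_rfl⟩
  nlinarith

theorem mul_nonneg_of_isMaxOn_mul_Icc (hmax : IsMaxOn (m * ·) (Icc 0 b) p)
    (hp : p ∈ Icc 0 b) : 0 ≤ p * m := by
  have h0 : m * 0 ≤ m * p := isMaxOn_iff.mp hmax 0 ⟨le_rfl, hp.1.trans hp.2⟩
  linarith [mul_comm p m]

theorem max_zero_eq_zero_of_isMaxOn_mul_Icc_of_lt (hmax : IsMaxOn (m * ·) (Icc 0 b) p)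
    (hp : p ∈ Icc 0 b) (hlt : p < b) : max m 0 = 0 :=
  max_eq_right (nonpos_of_isMaxOn_mul_Icc_of_lt hmax hp hlt)

theorem mul_max_zero_eq_of_isMaxOn_mul_Icc (hmax : IsMaxOn (m * ·) (Icc 0 b) p)
    (hp : p ∈ Icc 0 b) : b * max m 0 = p * m := by
  have hpm := mul_nonneg_of_isMaxOn_mul_Icc hmax hp
  rcases hp.2.lt_or_eq with hlt | rfl
  · have hm := nonpos_of_isMaxOn_mul_Icc_of_lt hmax hp hlt
    rw [max_eq_right hm, mul_zero]
    nlinarith [hp.1]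
  · rcases le_total 0 m with hm | hm
    · rw [max_eq_left hm]
    · -- `p * m ≥ 0` with `m ≤ 0 ≤ p` forces `p * m = 0`.
      rw [max_eq_right hm, mul_zero]
      nlinarith [hp.1]

end LinearMaximizer

theorem perfect_equilibrium_zero_residual_general
    (pbar : ℝ) (m₁ m₂ p₁ p₂ : ℝ)
    (hp₁ : p₁ ∈ Set.Icc (0 : ℝ) pbar) (hp₂ : p₂ ∈ Set.Icc (0 : ℝ) pbar)
    (heq : ∀ q₁ ∈ Set.Icc (0 : ℝ) pbar, ∀ q₂ ∈ Set.Icc (0 : ℝ) pbar,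
      (-m₁) * (q₁ - p₁) + (-m₂) * (q₂ - p₂) ≥ 0) :
    ∃ y₁ y₂ : ℝ, 0 ≤ y₁ ∧ 0 ≤ y₂ ∧ m₁ ≤ y₁ ∧ m₂ ≤ y₂ ∧
      (p₁ < pbar → y₁ = 0) ∧ (p₂ < pbar → y₂ = 0) ∧
      pbar * (y₁ + y₂) - (p₁ * m₁ + p₂ * m₂) = 0 := by
  have hmax₁ : IsMaxOn (m₁ * ·) (Icc 0 pbar) p₁ :=
    isMaxOn_iff.mpr fun q hq => by linarith [heq q hq p₂ hp₂]
  have hmax₂ : IsMaxOn (m₂ * ·) (Icc 0 pbar) p₂ :=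
    isMaxOn_iff.mpr fun q hq => by linarith [heq p₁ hp₁ q hq]
  refine ⟨max m₁ 0, max m₂ 0, le_max_right _ _, le_max_right _ _, le_max_left _ _,
    le_max_left _ _, max_zero_eq_zero_of_isMaxOn_mul_Icc_of_lt hmax₁ hp₁,
    max_zero_eq_zero_of_isMaxOn_mul_Icc_of_lt hmax₂ hp₂, ?_⟩
  rw [mul_add, mul_max_zero_eq_of_isMaxOn_mul_Icc hmax₁ hp₁,
    mul_max_zero_eq_of_isMaxOn_mul_Icc hmax₂ hp₂, sub_self]

/-- Perfect equilibrium yields zero residuals with complementary slackness: if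
`(p₁, p₂) ∈ [0, pbar]²` is an exact equilibrium point of the box-constrained game with
marginal utilities `m₁, m₂`, then there exist dual variables `y₁, y₂ ≥ 0` with `yᵢ ≥ mᵢ`,
`yᵢ = 0` whenever `pᵢ < pbar`, and duality gap exactly zero — so the regulator's inverse
variational problem admits a feasible point with all residual estimates equal to zero. -/
theorem perfect_equilibrium_zero_residual
    (pbar : ℝ) (hpbar : 0 < pbar) (m₁ m₂ p₁ p₂ : ℝ)
    (hp₁ : p₁ ∈ Set.Icc (0 : ℝ) pbar) (hp₂ : p₂ ∈ Set.Icc (0 : ℝ) pbar)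
    (heq : ∀ q₁ ∈ Set.Icc (0 : ℝ) pbar, ∀ q₂ ∈ Set.Icc (0 : ℝ) pbar,
      (-m₁) * (q₁ - p₁) + (-m₂) * (q₂ - p₂) ≥ 0) :
    ∃ y₁ y₂ : ℝ, 0 ≤ y₁ ∧ 0 ≤ y₂ ∧ m₁ ≤ y₁ ∧ m₂ ≤ y₂ ∧
      (p₁ < pbar → y₁ = 0) ∧ (p₂ < pbar → y₂ = 0) ∧
      pbar * (y₁ + y₂) - (p₁ * m₁ + p₂ * m₂) = 0 :=
  perfect_equilibrium_zero_residual_general pbar m₁ m₂ p₁ p₂ hp₁ hp₂ heq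
end
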